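/- Suppose F'' ⊆ F' ⊆ F are facility sets, f ∈ F'' and c ∈ C satisfy: d(c, f'') > 2(l+1)·OPT for all f'' ∈ F' \ {f} (i.e., the ball of radius 2(l+1)·OPT around c meets F' only in f), there exists f' ∈ F with d(c, f') ≤ 2l·OPT, and there exist t and g ∈ F'' \ {f} with f, g ∈ O_t. Then Γ(F') < Γ(F). -/

import Mathlib

open Finset

/-- `Φ` is a consolidation of `F` (with respect to optimal balls `O` and value `OPT`):
it covers `F`, each member has diameter at most `2·OPT`, and any two points of `F`
lying in a common optimal ball lie together in some member. -/
def IsConsolidation {C : Type*} [MetricSpace C] {k : ℕ} (OPT : ℝ)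
    (O : Fin k → Set C) (F : Set C) (Φ : Finset (Set C)) : Prop :=
  (∀ f ∈ F, ∃ P ∈ Φ, f ∈ P) ∧
  (∀ P ∈ Φ, ∀ x ∈ P, ∀ y ∈ P, dist x y ≤ 2 * OPT) ∧
  (∀ t : Fin k, ∀ f ∈ F ∩ O t, ∀ f' ∈ F ∩ O t, ∃ P ∈ Φ, f ∈ P ∧ f' ∈ P)

/-- The consolidation number `Γ(F)`: minimum cardinality of a consolidation of `F`. -/
noncomputable def consolidationNumber {C : Type*} [MetricSpace C] {k : ℕ} (OPT : ℝ)
    (O : Fin k → Set C) (F : Set C) : ℕ :=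
  sInf {n : ℕ | ∃ Φ : Finset (Set C), IsConsolidation OPT O F Φ ∧ Φ.card = n}

/-!
Take a consolidation `Φ` of `F` of minimal size and let `Q ∈ Φ` contain the facility `f'`
serving `c`. Since `Q` has diameter at most `2·OPT`, it lies within `2(l+1)·OPT` of `c`, so `f`
is the only point of `F'` it can contain. The member `P` joining `f` with `g` is not `Q`
(as `g ∉ Q`), so `P` takes over the role of `Q` and `Φ.erase Q` consolidates `F'`.
-/

section Consolidation

variable {C : Type*} [MetricSpace C] {k : ℕ} {OPT : ℝ} {O : Fin k → Set C}

theorem isConsolidation_image_univ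
    (hdiamO : ∀ t : Fin k, ∀ x ∈ O t, ∀ y ∈ O t, dist x y ≤ 2 * OPT)
    (hcover : ∀ c : C, ∃ t : Fin k, c ∈ O t) (F : Set C) :
    IsConsolidation OPT O F (univ.image O) := by
  refine ⟨fun x _ => ?_, ?_, ?_⟩
  · obtain ⟨t, ht⟩ := hcover x
    exact ⟨O t, mem_image_of_mem O (mem_univ t), ht⟩
  · rintro P hP
    obtain ⟨t, -, rfl⟩ := mem_image.mp hP
    exact hdiamO t
  · rintro t a ⟨-, ha⟩ b ⟨-, hb⟩
    exact ⟨O t, mem_image_of_mem O (mem_univ t), ha, hb⟩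

theorem consolidationNumber_le {F : Set C} {Φ : Finset (Set C)}
    (hΦ : IsConsolidation OPT O F Φ) : consolidationNumber OPT O F ≤ Φ.card :=
  Nat.sInf_le ⟨Φ, hΦ, rfl⟩

theorem exists_isConsolidation_card_eq {F : Set C} (h : ∃ Φ, IsConsolidation OPT O F Φ) :
    ∃ Φ, IsConsolidation OPT O F Φ ∧ Φ.card = consolidationNumber OPT O F := by
  obtain ⟨Φ, hΦ⟩ := h
  exact Nat.sInf_mem (s := {n | ∃ Φ, IsConsolidation OPT O F Φ ∧ Φ.card = n})
    ⟨_, Φ, hΦ, rfl⟩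

theorem IsConsolidation.subset_closedBall {F : Set C} {Φ : Finset (Set C)}
    (hΦ : IsConsolidation OPT O F Φ) {Q : Set C} (hQ : Q ∈ Φ) {x : C} (hx : x ∈ Q) :
    Q ⊆ Metric.closedBall x (2 * OPT) := fun y hy =>
  Metric.mem_closedBall'.mpr (hΦ.2.1 Q hQ x hx y hy)

theorem IsConsolidation.erase {F F' : Set C} {Φ : Finset (Set C)}
    (hΦ : IsConsolidation OPT O F Φ) (hF' : F' ⊆ F) {P Q : Set C} (hP : P ∈ Φ)
    (hPQ : P ≠ Q) {f : C} (hfP : f ∈ P) (hQ : Q ∩ F' ⊆ {f}) : IsConsolidation OPT O F' (Φ.erase Q) := by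
  obtain ⟨hcov, hdiam, hpair⟩ := hΦ
  have hreplace : ∀ R ∈ Φ, ∀ s ⊆ R ∩ F', ∃ R' ∈ Φ.erase Q, s ⊆ R' := by
    intro R hR s hs
    by_cases hRQ : R = Q
    · subst hRQ
      exact ⟨P, mem_erase.mpr ⟨hPQ, hP⟩, fun x hx => (hQ (hs hx) : x = f) ▸ hfP⟩
    · exact ⟨R, mem_erase.mpr ⟨hRQ, hR⟩, fun x hx => (hs hx).1⟩
  refine ⟨fun x hx => ?_, fun R hR => hdiam R (mem_of_mem_erase hR),
    fun t a ha b hb => ?_⟩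
  · obtain ⟨R, hR, hxR⟩ := hcov x (hF' hx)
    obtain ⟨R', hR', hsub⟩ := hreplace R hR {x} (Set.singleton_subset_iff.mpr ⟨hxR, hx⟩)
    exact ⟨R', hR', hsub rfl⟩
  · obtain ⟨R, hR, haR, hbR⟩ := hpair t a ⟨hF' ha.1, ha.2⟩ b ⟨hF' hb.1, hb.2⟩
    obtain ⟨R', hR', hsub⟩ :=
      hreplace R hR {a, b} (Set.insert_subset_iff.mpr ⟨⟨haR, ha.1⟩, by simp [hbR, hb.1]⟩)
    exact ⟨R', hR', hsub (Set.mem_insert a {b}), hsub (Set.mem_insert_of_mem a rfl)⟩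

end Consolidation

theorem stmt7_general {C : Type*} [MetricSpace C] {k : ℕ}
    (OPT : ℝ) (O : Fin k → Set C)
    (hdiamO : ∀ t : Fin k, ∀ x ∈ O t, ∀ y ∈ O t, dist x y ≤ 2 * OPT)
    (hcover : ∀ c : C, ∃ t : Fin k, c ∈ O t)
    (F F' F'' : Set C) (h1 : F'' ⊆ F') (h2 : F' ⊆ F)
    (f : C) (hf : f ∈ F'') (c : C) (l : ℕ)
    (hball : ∀ f'' ∈ F', f'' ≠ f → 2 * (l + 1) * OPT < dist c f'')
    (hserved : ∃ f' ∈ F, dist c f' ≤ 2 * l * OPT)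
    (hg : ∃ t : Fin k, ∃ g ∈ F'', g ≠ f ∧ f ∈ O t ∧ g ∈ O t) :
    consolidationNumber OPT O F' < consolidationNumber OPT O F := by
  obtain ⟨f', hf'F, hcf'⟩ := hserved
  obtain ⟨t, g, hgF'', hgf, hfO, hgO⟩ := hg
  obtain ⟨Φ, hΦ, hcard⟩ :=
    exists_isConsolidation_card_eq ⟨_, isConsolidation_image_univ hdiamO hcover F⟩
  obtain ⟨Q, hQ, hf'Q⟩ := hΦ.1 f' hf'F
  obtain ⟨P, hP, hfP, hgP⟩ := hΦ.2.2 t f ⟨h2 (h1 hf), hfO⟩ g ⟨h2 (h1 hgF''), hgO⟩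
  have hQF' : Q ∩ F' ⊆ {f} := by
    rintro x ⟨hxQ, hxF'⟩
    by_contra hxf
    have hf'x := Metric.mem_closedBall'.mp (hΦ.subset_closedBall hQ hf'Q hxQ)
    have hcx := dist_triangle c f' x
    linarith [hball x hxF' hxf]
  have hPQ : P ≠ Q := by
    rintro rfl
    exact hgf (hQF' ⟨hgP, h1 hgF''⟩)
  calc consolidationNumber OPT O F' ≤ (Φ.erase Q).card :=
        consolidationNumber_le (hΦ.erase h2 hP hPQ hfP hQF')
    _ < Φ.card := card_erase_lt_of_mem hQ
    _ = consolidationNumber OPT O F := hcard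

theorem stmt7 {C : Type*} [MetricSpace C] [Fintype C] [Nonempty C] {k : ℕ}
    (OPT : ℝ) (hOPT : 0 < OPT) (O : Fin k → Set C)
    (hdiamO : ∀ t : Fin k, ∀ x ∈ O t, ∀ y ∈ O t, dist x y ≤ 2 * OPT)
    (hcover : ∀ c : C, ∃ t : Fin k, c ∈ O t)
    (F F' F'' : Set C) (h1 : F'' ⊆ F') (h2 : F' ⊆ F)
    (f : C) (hf : f ∈ F'') (c : C) (l : ℕ)
    (hball : ∀ f'' ∈ F', f'' ≠ f → 2 * (l + 1) * OPT < dist c f'')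
    (hserved : ∃ f' ∈ F, dist c f' ≤ 2 * l * OPT)
    (hg : ∃ t : Fin k, ∃ g ∈ F'', g ≠ f ∧ f ∈ O t ∧ g ∈ O t) :
    consolidationNumber OPT O F' < consolidationNumber OPT O F :=
  stmt7_general OPT O hdiamO hcover F F' F'' h1 h2 f hf c l hball hserved hg
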